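/- arXiv:1104.2542 — 6 statements merged into one kernel-verified Lean document; each statement's English description precedes it below -/
import Mathlib

section
/- For every positive integer n, 1/γ(n) = Σ_{rs = n} μ²(s) ν(s), where ν(s) := ∏_{p | s} (1 - h(p))/(p - 1) and γ(n) := ∏_{p | n} (1 - 1/p)/(1 - h(p)/p). -/
open Finset ArithmeticFunction
open scoped ArithmeticFunction.Moebius

/-! Each local factor inverts to `1 + ν(p)`, and expanding `∏_{p ∣ n} (1 + ν(p))` produces one
term `∏_{p ∈ t} ν(p)` for every set `t` of prime divisors of `n`, that is, for every squarefree
divisor `s = ∏_{p ∈ t} p`; the weight `μ²(s)` discards the other divisors. -/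

lemma inv_one_sub_inv_div_one_sub_div {K : Type*} [Field K] {x y : K} (hx : x ≠ 0)
    (hx₁ : x ≠ 1) (hxy : y ≠ x) :
    ((1 - 1 / x) / (1 - y / x))⁻¹ = 1 + (1 - y) / (x - 1) := by
  have hx₁' : x - 1 ≠ 0 := sub_ne_zero.mpr hx₁
  have hxy' : x - y ≠ 0 := sub_ne_zero.mpr hxy.symm
  field_simp
  ring

lemma Nat.sum_divisors_moebius_sq_mul {R : Type*} [CommRing R] (g : ℕ → R) (n : ℕ) :
    ∑ d ∈ n.divisors, (μ d : R) ^ 2 * g d = ∑ d ∈ n.divisors with Squarefree d, g d := by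
  rw [sum_filter]
  refine sum_congr rfl fun d _ => ?_
  rw [← Int.cast_pow, moebius_sq]
  split_ifs <;> simp

lemma Nat.prod_primeFactors_one_add {R : Type*} [CommRing R] (f : ℕ → R) {n : ℕ}
    (hn : n ≠ 0) :
    ∏ p ∈ n.primeFactors, (1 + f p) =
      ∑ d ∈ n.divisors, (μ d : R) ^ 2 * ∏ p ∈ d.primeFactors, f p := by
  rw [Nat.sum_divisors_moebius_sq_mul, Nat.sum_divisors_filter_squarefree hn, Nat.factors_eq,
    List.toFinset_coe, Nat.toFinset_factors]
  simp_rw [add_comm (1 : R)]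
  rw [prod_add]
  refine sum_congr rfl fun t ht => ?_
  have ht_prime : ∀ p ∈ t, p.Prime := fun p hp =>
    Nat.prime_of_mem_primeFactors (mem_powerset.mp ht hp)
  rw [prod_const_one, mul_one, t.prod_val, Function.id_def, Nat.primeFactors_prod ht_prime]

/-- With `γ(n) = ∏_{p ∣ n} (1 - 1/p)/(1 - h(p)/p)` and
`ν(s) = ∏_{p ∣ s} (1 - h(p))/(p - 1)`, one has
`1/γ(n) = ∑_{s ∣ n} μ²(s) ν(s)` for every positive integer `n`. -/
theorem stmt7 (h : ℕ → ℝ) (hp : ∀ p : ℕ, p.Prime → h p < p) (n : ℕ) (hn : 0 < n) :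
    (∏ p ∈ n.primeFactors, (1 - 1 / (p : ℝ)) / (1 - h p / p))⁻¹ =
      ∑ s ∈ n.divisors, ((ArithmeticFunction.moebius s : ℝ)) ^ 2 *
        ∏ p ∈ s.primeFactors, (1 - h p) / ((p : ℝ) - 1) := by
  rw [← prod_inv_distrib, ← Nat.prod_primeFactors_one_add _ hn.ne']
  refine prod_congr rfl fun p hp_mem => ?_
  have hp_prime := Nat.prime_of_mem_primeFactors hp_mem
  exact inv_one_sub_inv_div_one_sub_div (by exact_mod_cast hp_prime.ne_zero)
    (by exact_mod_cast hp_prime.ne_one) (hp p hp_prime).ne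
end

section
/- For real z > 1 and M > 1, the contour integral (1/2πi) ∫_{Re s = -1/2} M^s/(s+1)^z ds equals (1/M) · (log M)^{z-1}/Γ(z). -/
/-!
For `0 < re a` and `0 < re b`, `∫₀^∞ t^(a-1) e^(-bt) dt = Γ(a) / b^a`: for real `b` this is the
Gamma integral, and both sides are holomorphic in `b` on the right half-plane. Hence the
one-sided kernel `x ↦ 𝟙_{x>0} x^(a-1) e^(-cx)` has Fourier transform `Γ(a) / (c + 2πiw)^a`,
which is integrable for `a > 1`. Fourier inversion at `x = log M > 0`, after the substitution
`t = 2πw`, evaluates the integral over the line `re s = σ` for any `σ > -1`, with `c = σ + 1`;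
the factors `e^(σ log M)` and `e^(-c log M)` combine into `1/M`.
-/

open Complex MeasureTheory Real Set Filter Metric
open scoped Topology FourierTransform

section LaplaceTransform

variable {a : ℂ}

lemma integrableOn_rpow_mul_exp_neg_mul_Ioi {s r : ℝ} (hs : -1 < s) (hr : 0 < r) :
    IntegrableOn (fun t : ℝ => t ^ s * Real.exp (-r * t)) (Ioi 0) := by
  simpa only [Real.rpow_one] using integrableOn_rpow_mul_exp_neg_mul_rpow hs zero_lt_one hr

lemma norm_cpow_mul_cexp_neg_mul {t : ℝ} (ht : 0 < t) (b : ℂ) :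
    ‖(t : ℂ) ^ a * cexp (-(b * t))‖ = t ^ a.re * Real.exp (-b.re * t) := by
  rw [norm_mul, norm_cpow_eq_rpow_re_of_pos ht, Complex.norm_exp]
  simp

lemma integrableOn_cpow_mul_cexp_neg_mul_Ioi (ha : 0 < a.re) {b : ℂ} (hb : 0 < b.re) :
    IntegrableOn (fun t : ℝ => (t : ℂ) ^ (a - 1) * cexp (-(b * t))) (Ioi 0) := by
  refine Integrable.mono' (integrableOn_rpow_mul_exp_neg_mul_Ioi (s := a.re - 1) (by linarith) hb)
    (by fun_prop) ?_
  filter_upwards [ae_restrict_mem measurableSet_Ioi] with t ht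
  rw [norm_cpow_mul_cexp_neg_mul ht, sub_re, one_re]

lemma hasDerivAt_integral_cpow_mul_cexp_neg_mul (ha : 0 < a.re) {b : ℂ} (hb : 0 < b.re) :
    HasDerivAt (fun c : ℂ => ∫ t : ℝ in Ioi 0, (t : ℂ) ^ (a - 1) * cexp (-(c * t)))
      (∫ t : ℝ in Ioi 0, -((t : ℂ) ^ a * cexp (-(b * t)))) b := by
  have hδ : 0 < b.re / 2 := half_pos hb
  have hre : ∀ c ∈ ball b (b.re / 2), b.re / 2 ≤ c.re := fun c hc => by
    have := (abs_le.mp ((abs_re_le_norm (c - b)).trans (mem_ball_iff_norm.mp hc).le)).1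
    rw [sub_re] at this
    linarith
  refine (hasDerivAt_integral_of_dominated_loc_of_deriv_le (ball_mem_nhds b hδ)
    (F := fun c t => (t : ℂ) ^ (a - 1) * cexp (-(c * t)))
    (F' := fun c t => -((t : ℂ) ^ a * cexp (-(c * t))))
    (bound := fun t => t ^ a.re * Real.exp (-(b.re / 2) * t))
    (Eventually.of_forall fun c => by fun_prop)
    (integrableOn_cpow_mul_cexp_neg_mul_Ioi ha hb) (by fun_prop) ?_
    (integrableOn_rpow_mul_exp_neg_mul_Ioi (by linarith) hδ) ?_).2
  · filter_upwards [ae_restrict_mem measurableSet_Ioi] with t (ht : 0 < t) c hc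
    rw [norm_neg, norm_cpow_mul_cexp_neg_mul ht]
    gcongr
    nlinarith [hre c hc]
  · filter_upwards [ae_restrict_mem measurableSet_Ioi] with t (ht : 0 < t) c _
    have hpow : (t : ℂ) ^ a = (t : ℂ) ^ (a - 1) * t := by
      conv_lhs => rw [← sub_add_cancel a 1]
      rw [cpow_add _ _ (ofReal_ne_zero.mpr ht.ne'), cpow_one]
    have := (((hasDerivAt_mul_const (x := c) (t : ℂ)).neg).cexp).const_mul ((t : ℂ) ^ (a - 1))
    exact this.congr_deriv (by simp only [Pi.neg_apply, hpow]; ring)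

theorem integral_cpow_mul_cexp_neg_mul_Ioi (ha : 0 < a.re) {b : ℂ} (hb : 0 < b.re) :
    ∫ t : ℝ in Ioi 0, (t : ℂ) ^ (a - 1) * cexp (-(b * t)) = Complex.Gamma a / b ^ a := by
  set U : Set ℂ := {c | 0 < c.re}
  have hU : IsOpen U := isOpen_lt continuous_const continuous_re
  have hF : AnalyticOnNhd ℂ
      (fun c : ℂ => ∫ t : ℝ in Ioi 0, (t : ℂ) ^ (a - 1) * cexp (-(c * t))) U :=
    DifferentiableOn.analyticOnNhd (fun c hc =>
      (hasDerivAt_integral_cpow_mul_cexp_neg_mul ha hc).differentiableAt.differentiableWithinAt) hU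
  have hG : AnalyticOnNhd ℂ (fun c : ℂ => Complex.Gamma a / c ^ a) U := by
    refine DifferentiableOn.analyticOnNhd (fun c (hc : 0 < c.re) => ?_) hU
    have hc0 : c ≠ 0 := fun h => by simp [h] at hc
    exact (differentiableAt_const _).div (differentiableAt_id.cpow_const (Or.inl hc))
      (fun h => hc0 ((cpow_eq_zero_iff _ _).mp h).1) |>.differentiableWithinAt
  have hreal : ∀ r : ℝ, 0 < r →
      ∫ t : ℝ in Ioi 0, (t : ℂ) ^ (a - 1) * cexp (-(r * t)) = Complex.Gamma a / (r : ℂ) ^ a := by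
    intro r hr
    have harg : (r : ℂ).arg ≠ π := by rw [arg_ofReal_of_nonneg hr.le]; exact pi_ne_zero.symm
    rw [integral_cpow_mul_exp_neg_mul_Ioi ha hr, one_div, inv_cpow _ _ harg, div_eq_inv_mul]
  have hofReal : Tendsto ((↑) : ℝ → ℂ) (𝓝[≠] 1) (𝓝[≠] 1) := by
    simpa using continuous_ofReal.continuousWithinAt.tendsto_nhdsWithin (x := (1 : ℝ))
      (t := {1}ᶜ) fun x hx => by simpa using hx
  have hfreq : ∃ᶠ c in 𝓝[≠] (1 : ℂ),
      ∫ t : ℝ in Ioi 0, (t : ℂ) ^ (a - 1) * cexp (-(c * t)) = Complex.Gamma a / c ^ a :=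
    hofReal.frequently <| Eventually.frequently <|
      (eventually_nhdsWithin_of_eventually_nhds (eventually_gt_nhds one_pos)).mono hreal
  exact hF.eqOn_of_preconnected_of_frequently_eq hG (convex_halfSpace_re_gt 0).isPreconnected
    (by simp [U]) hfreq hb

end LaplaceTransform

lemma integrable_inv_cpow_ofReal_add_mul_I {c a : ℝ} (hc : 0 < c) (ha : 1 < a) :
    Integrable fun t : ℝ => (((c : ℂ) + t * I) ^ (a : ℂ))⁻¹ := by
  set κ := min c 1 / 2 with hκ_def
  have hκ : 0 < κ := by positivity
  have hlow : ∀ t : ℝ, κ * (1 + ‖t‖) ≤ ‖(c : ℂ) + t * I‖ := fun t => by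
    have hre := re_le_norm ((c : ℂ) + t * I)
    have him := abs_im_le_norm ((c : ℂ) + t * I)
    simp only [add_re, ofReal_re, mul_re, I_re, mul_zero, ofReal_im, I_im, mul_one, sub_self,
      add_zero, add_im, mul_im, zero_add] at hre him
    rw [Real.norm_eq_abs, hκ_def]
    nlinarith [min_le_left c 1, mul_le_mul_of_nonneg_right (min_le_right c 1) (abs_nonneg t)]
  refine ((integrable_one_add_norm (r := a) (by simpa using ha)).const_mul (κ ^ (-a))).mono'
    (Measurable.aestronglyMeasurable (by fun_prop)) (Eventually.of_forall fun t => ?_)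
  rw [norm_inv, norm_cpow_real, ← Real.rpow_neg (norm_nonneg _),
    ← Real.mul_rpow hκ.le (by positivity)]
  exact Real.rpow_le_rpow_of_nonpos (by positivity) (hlow t) (by linarith)

noncomputable def gammaKernel (a b : ℂ) : ℝ → ℂ :=
  (Ioi 0).indicator fun x => (x : ℂ) ^ (a - 1) * cexp (-(b * x))

section GammaKernel

variable {a b : ℂ}

lemma gammaKernel_of_pos {x : ℝ} (hx : 0 < x) :
    gammaKernel a b x = (x : ℂ) ^ (a - 1) * cexp (-(b * x)) :=
  indicator_of_mem hx _

lemma integrable_gammaKernel (ha : 0 < a.re) (hb : 0 < b.re) : Integrable (gammaKernel a b) :=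
  (integrable_indicator_iff measurableSet_Ioi).mpr (integrableOn_cpow_mul_cexp_neg_mul_Ioi ha hb)

lemma continuousAt_gammaKernel {x : ℝ} (hx : 0 < x) : ContinuousAt (gammaKernel a b) x := by
  refine ContinuousOn.continuousAt_indicator ?_ (by simpa using hx.ne')
  rw [interior_Ioi]
  exact ContinuousOn.mul (fun t (ht : 0 < t) =>
    (continuousAt_ofReal_cpow_const t _ (Or.inr ht.ne')).continuousWithinAt) (by fun_prop)

lemma fourier_gammaKernel (ha : 0 < a.re) (hb : 0 < b.re) (w : ℝ) :
    𝓕 (gammaKernel a b) w = Complex.Gamma a / (b + 2 * π * w * I) ^ a := by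
  have hbw : 0 < (b + 2 * π * w * I).re := by simpa using hb
  rw [fourier_real_eq_integral_exp_smul, ← integral_cpow_mul_cexp_neg_mul_Ioi ha hbw,
    ← integral_indicator measurableSet_Ioi]
  congr 1 with v
  by_cases hv : v ∈ Ioi 0
  · rw [gammaKernel, indicator_of_mem hv, indicator_of_mem hv, smul_eq_mul, mul_left_comm,
      ← Complex.exp_add]
    congr 2
    push_cast
    ring
  · rw [gammaKernel, indicator_of_notMem hv, indicator_of_notMem hv, smul_zero]

end GammaKernel

lemma integrable_fourier_gammaKernel {a c : ℝ} (ha : 1 < a) (hc : 0 < c) :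
    Integrable (𝓕 (gammaKernel a c)) := by
  have ha' : 0 < (a : ℂ).re := by simp; linarith
  have hc' : 0 < (c : ℂ).re := by simpa using hc
  simp_rw [funext (fourier_gammaKernel ha' hc'), div_eq_mul_inv]
  refine ((integrable_inv_cpow_ofReal_add_mul_I hc ha).comp_mul_left' (R := 2 * π)
    (by positivity)).const_mul (Complex.Gamma a) |>.congr (Eventually.of_forall fun w => ?_)
  simp only [ofReal_mul, ofReal_ofNat]

lemma integral_cexp_mul_I_div_cpow {a c L : ℝ} (ha : 1 < a) (hc : 0 < c) (hL : 0 < L) :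
    ∫ t : ℝ, cexp (t * L * I) / ((c : ℂ) + t * I) ^ (a : ℂ) =
      2 * π * ((L : ℂ) ^ ((a : ℂ) - 1) * cexp (-(c * L))) / Complex.Gamma a := by
  have ha' : 0 < (a : ℂ).re := by simp; linarith
  have hc' : 0 < (c : ℂ).re := by simpa using hc
  have hinv := (integrable_gammaKernel ha' hc').fourierInv_fourier_eq
    (integrable_fourier_gammaKernel ha hc) (continuousAt_gammaKernel hL)
  simp_rw [fourierInv_eq', fourier_gammaKernel ha' hc', gammaKernel_of_pos hL] at hinv
  have hscaled : ∫ w : ℝ, cexp (↑(2 * π * w) * L * I) / ((c : ℂ) + ↑(2 * π * w) * I) ^ (a : ℂ) =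
      (Complex.Gamma a)⁻¹ * ((L : ℂ) ^ ((a : ℂ) - 1) * cexp (-(c * L))) := by
    have hΓ : Complex.Gamma a ≠ 0 := Complex.Gamma_ne_zero_of_re_pos ha'
    rw [← hinv, ← integral_const_mul]
    congr 1 with w
    simp only [RCLike.inner_apply, conj_trivial, smul_eq_mul]
    field_simp
    push_cast
    ring_nf
  rw [Measure.integral_comp_mul_left (fun t : ℝ => cexp (t * L * I) / ((c : ℂ) + t * I) ^ (a : ℂ)),
    abs_of_pos (by positivity), inv_smul_eq_iff₀ (by positivity)] at hscaled
  rw [hscaled, real_smul]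
  push_cast
  ring

theorem integral_cexp_mul_div_add_one_cpow {a σ L : ℝ} (ha : 1 < a) (hσ : -1 < σ) (hL : 0 < L) :
    (1 / (2 * π)) * ∫ t : ℝ, cexp ((σ + t * I) * L) / ((σ + t * I) + 1) ^ (a : ℂ) =
      ((Real.exp (-L) * L ^ (a - 1) / Real.Gamma a : ℝ) : ℂ) := by
  have hterm : ∀ t : ℝ, cexp ((σ + t * I) * L) / ((σ + t * I) + 1) ^ (a : ℂ) =
      cexp (σ * L) * (cexp (t * L * I) / (((σ + 1 : ℝ) : ℂ) + t * I) ^ (a : ℂ)) := fun t => by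
    rw [mul_div_assoc', ← Complex.exp_add]
    push_cast
    ring_nf
  have hexp : cexp (σ * L) * cexp (-((σ + 1 : ℝ) * L)) = cexp (-L) := by
    rw [← Complex.exp_add]
    push_cast
    ring_nf
  simp_rw [hterm]
  rw [integral_const_mul, integral_cexp_mul_I_div_cpow ha (by linarith) hL, ofReal_div,
    ofReal_mul, ofReal_exp, ofReal_cpow hL.le, ← Gamma_ofReal, ofReal_neg, ← hexp, ofReal_sub,
    ofReal_one]
  field_simp

/-- Hankel-type evaluation: for real `z > 1` and `M > 1`,
`(1/2πi) ∫_{Re s = -1/2} M^s/(s+1)^z ds = (1/M) (log M)^{z-1}/Γ(z)`.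
Parametrizing `s = -1/2 + it`, `ds = i dt`, the left side is
`(1/2π) ∫_ℝ M^{-1/2+it}/((-1/2+it)+1)^z dt`. -/
theorem stmt8 (z M : ℝ) (hz : 1 < z) (hM : 1 < M) :
    (1 / (2 * Real.pi)) * ∫ t : ℝ,
        Complex.exp ((-1/2 + t * I) * Real.log M) / ((-1/2 + t * I) + 1) ^ (z : ℂ) =
      (((1 / M) * Real.log M ^ (z - 1) / Real.Gamma z : ℝ) : ℂ) := by
  have h := integral_cexp_mul_div_add_one_cpow hz (by norm_num : (-1 : ℝ) < -1 / 2)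
    (Real.log_pos hM)
  rw [Real.exp_neg, Real.exp_log (by linarith), inv_eq_one_div] at h
  push_cast at h ⊢
  exact h
end

section
/- Let d ≡ -1 (mod 4), let a be odd, and e ≥ 2. Then the number of pairs (x,y) mod 2^e with x² - d y² ≡ a (mod 2^e) equals 2^{e+1} if a ≡ 1 (mod 4), and equals 0 if a ≡ 3 (mod 4). -/
/-!
Write `F(x, y) = x² - d y²` and `N_e` for the number of solutions of `F = a` modulo
`2^e`. Modulo 4 we have `F(x, y) = x² + y² ≠ 3`, which settles `a ≡ 3 (mod 4)`. For
`a ≡ 1 (mod 4)`, `N_2 = 8` by inspection and `N_{e+1} = 2 N_e` for `e ≥ 2`: the `4 N_e` pairs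
modulo `2^{e+1}` with `F = a` modulo `2^e` are permuted by the translation by
`(2^{e-1}, 2^{e-1})`, which changes `F` by `2^e (x - d y) + 2^{2e-2} (1 - d) ≡ 2^e (mod 2^{e+1})`
because `x - d y` and `d` are odd. So it exchanges the solutions modulo `2^{e+1}` with the other
pairs, and exactly half of the `4 N_e` pairs are solutions.
-/

open Finset

theorem AddMonoidHom.card_filter_comp_mul_card_eq {G H : Type*} [AddGroup G] [Fintype G]
    [AddGroup H] [Fintype H] [DecidableEq H] (f : G →+ H) (hf : Function.Surjective f)
    (P : H → Prop) [DecidablePred P] :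
    #{g | P (f g)} * Fintype.card H = #{h | P h} * Fintype.card G := by
  set k := #{g | f g = 0}
  have hfiber (s : Finset H) : #{g | f g ∈ s} = #s * k := by
    rw [card_eq_sum_card_fiberwise (f := f) (t := s) (fun g hg => by simpa using hg)]
    refine (sum_congr rfl fun h hh => ?_).trans (sum_const_nat fun _ _ => rfl)
    rw [filter_filter]
    refine (congrArg card (filter_congr fun g _ => ?_)).trans
      (AddMonoidHom.card_fiber_eq_of_mem_range f (hf h) (hf 0))
    exact ⟨fun h' => h'.2, fun h' => ⟨h' ▸ hh, h'⟩⟩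
  have hP : #{g | P (f g)} = #{h | P h} * k := by simpa using hfiber {h | P h}
  have hG : Fintype.card G = Fintype.card H * k := by simpa using hfiber univ
  rw [hP, hG]
  ring

theorem Finset.two_mul_card_filter_eq_card_of_toggle {α : Type*} {s : Finset α}
    {p : α → Prop} [DecidablePred p] (τ : α → α) (hτ : Set.InjOn τ s)
    (hmaps : ∀ x ∈ s, τ x ∈ s) (htoggle : ∀ x ∈ s, p (τ x) ↔ ¬ p x) :
    2 * #{x ∈ s | p x} = #s := by
  have hinj (q : α → Prop) [DecidablePred q] : Set.InjOn τ ↑{x ∈ s | q x} :=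
    hτ.mono (coe_subset.mpr (filter_subset _ _))
  have hle : #{x ∈ s | p x} ≤ #{x ∈ s | ¬ p x} :=
    card_le_card_of_injOn τ (fun x hx => mem_filter.mpr ⟨hmaps x (mem_filter.mp hx).1,
      fun h => (htoggle x (mem_filter.mp hx).1).mp h (mem_filter.mp hx).2⟩) (hinj _)
  have hge : #{x ∈ s | ¬ p x} ≤ #{x ∈ s | p x} :=
    card_le_card_of_injOn τ (fun x hx => mem_filter.mpr ⟨hmaps x (mem_filter.mp hx).1,
      (htoggle x (mem_filter.mp hx).1).mpr (mem_filter.mp hx).2⟩) (hinj _)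
  have := card_filter_add_card_filter_not (s := s) (fun x => p x)
  omega

theorem Int.two_mul_dvd_add_self_iff {n z : ℤ} (hn : n ≠ 0) (hz : n ∣ z) :
    2 * n ∣ z + n ↔ ¬ 2 * n ∣ z := by
  obtain ⟨m, rfl⟩ := hz
  rw [show n * m + n = n * (m + 1) by ring, mul_comm 2 n, mul_dvd_mul_iff_left hn,
    mul_dvd_mul_iff_left hn]
  omega

theorem Int.sq_sub_mul_sq_add_two_pow_modEq {d x y : ℤ} (hd : Odd d) (hxy : Odd (x - d * y))
    (k : ℕ) :
    (x + 2 ^ (k + 1)) ^ 2 - d * (y + 2 ^ (k + 1)) ^ 2 ≡ x ^ 2 - d * y ^ 2 + 2 ^ (k + 2)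
      [ZMOD 2 ^ (k + 3)] := by
  obtain ⟨m, hm⟩ := hxy
  obtain ⟨n, rfl⟩ := hd
  obtain rfl : x = (2 * n + 1) * y + 2 * m + 1 := by linarith
  exact Int.modEq_iff_dvd.mpr ⟨2 ^ k * n - m, by ring⟩

theorem Int.dvd_sq_sub_mul_sq_add_two_pow {d a x y : ℤ} (hd : Odd d) (ha : Odd a) (k : ℕ)
    (h : 2 ^ (k + 2) ∣ x ^ 2 - d * y ^ 2 - a) :
    2 ^ (k + 2) ∣ (x + 2 ^ (k + 1)) ^ 2 - d * (y + 2 ^ (k + 1)) ^ 2 - a ∧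
      (2 ^ (k + 3) ∣ (x + 2 ^ (k + 1)) ^ 2 - d * (y + 2 ^ (k + 1)) ^ 2 - a ↔
        ¬ 2 ^ (k + 3) ∣ x ^ 2 - d * y ^ 2 - a) := by
  have hodd : Odd (x ^ 2 - d * y ^ 2) := by
    obtain ⟨m, hm⟩ := h
    rw [show x ^ 2 - d * y ^ 2 = a + 2 * (2 ^ (k + 1) * m) by linear_combination hm]
    exact ha.add_even (even_two_mul _)
  have hxy : Odd (x - d * y) := by simpa [parity_simps, hd] using hodd
  have hshift : (x + 2 ^ (k + 1)) ^ 2 - d * (y + 2 ^ (k + 1)) ^ 2 - a ≡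
      x ^ 2 - d * y ^ 2 - a + 2 ^ (k + 2) [ZMOD 2 ^ (k + 3)] :=
    ((Int.sq_sub_mul_sq_add_two_pow_modEq hd hxy k).sub_right a).trans (by ring_nf; rfl)
  have htoggle := Int.two_mul_dvd_add_self_iff (pow_ne_zero (k + 2) two_ne_zero) h
  rw [← pow_succ'] at htoggle
  exact ⟨((hshift.of_dvd (pow_dvd_pow 2 (by omega))).dvd_iff).mpr (dvd_add h dvd_rfl),
    hshift.dvd_iff.trans htoggle⟩

def solutionCount (d a : ℤ) (n : ℕ) [NeZero n] : ℕ :=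
  #{p : ZMod n × ZMod n | p.1 ^ 2 - d * p.2 ^ 2 = a}

theorem intCast_sq_sub_mul_sq_eq_iff_dvd (d a x y : ℤ) (n : ℕ) :
    (x : ZMod n) ^ 2 - d * (y : ZMod n) ^ 2 = a ↔ (n : ℤ) ∣ x ^ 2 - d * y ^ 2 - a := by
  rw [← ZMod.intCast_zmod_eq_zero_iff_dvd]
  push_cast
  exact sub_eq_zero.symm

theorem card_filter_castHom_mul_eq (d a : ℤ) {m n : ℕ} [NeZero m] [NeZero n] (h : m ∣ n) :
    #{p : ZMod n × ZMod n | ZMod.castHom h (ZMod m) p.1 ^ 2 - d * ZMod.castHom h (ZMod m) p.2 ^ 2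
      = a} * (m * m) = solutionCount d a m * (n * n) := by
  have := ((ZMod.castHom h (ZMod m)).toAddMonoidHom.prodMap
    (ZMod.castHom h (ZMod m)).toAddMonoidHom).card_filter_comp_mul_card_eq
      (Prod.map_surjective.mpr ⟨ZMod.castHom_surjective h, ZMod.castHom_surjective h⟩)
      (fun q => q.1 ^ 2 - d * q.2 ^ 2 = a)
  simp only [Fintype.card_prod, ZMod.card] at this
  exact this

theorem solutionCount_two_pow_add_three {d a : ℤ} (hd : Odd d) (ha : Odd a) (k : ℕ) :
    solutionCount d a (2 ^ (k + 3)) = 2 * solutionCount d a (2 ^ (k + 2)) := by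
  have hdvd : 2 ^ (k + 2) ∣ 2 ^ (k + 3) := pow_dvd_pow 2 (by omega)
  set π := ZMod.castHom hdvd (ZMod (2 ^ (k + 2)))
  set T : Finset (ZMod (2 ^ (k + 3)) × ZMod (2 ^ (k + 3))) :=
    {p | π p.1 ^ 2 - d * π p.2 ^ 2 = a}
  have hT : #T = 4 * solutionCount d a (2 ^ (k + 2)) := by
    have := card_filter_castHom_mul_eq d a hdvd
    exact Nat.eq_of_mul_eq_mul_right (m := 2 ^ (k + 2) * 2 ^ (k + 2)) (by positivity)
      (by rw [this]; ring)
  have hsub : solutionCount d a (2 ^ (k + 3)) =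
      #{p ∈ T | p.1 ^ 2 - (d : ZMod (2 ^ (k + 3))) * p.2 ^ 2 = a} := by
    rw [solutionCount, filter_filter]
    refine congrArg card (filter_congr fun p _ => ⟨fun h => ⟨?_, h⟩, And.right⟩)
    simpa using congrArg π h
  have lift (p : ZMod (2 ^ (k + 3)) × ZMod (2 ^ (k + 3))) :
      ∃ x y : ℤ, p = ((x : ZMod _), (y : ZMod _)) :=
    ⟨p.1.val, p.2.val, by simp⟩
  have translate (x y : ℤ) :
      ((x : ZMod (2 ^ (k + 3))), (y : ZMod (2 ^ (k + 3)))) + (2 ^ (k + 1), 2 ^ (k + 1)) =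
        (((x + 2 ^ (k + 1) : ℤ) : ZMod _), ((y + 2 ^ (k + 1) : ℤ) : ZMod _)) := by
    push_cast
    rfl
  have hS : 2 * solutionCount d a (2 ^ (k + 3)) = #T := by
    rw [hsub]
    refine two_mul_card_filter_eq_card_of_toggle (fun p => p + (2 ^ (k + 1), 2 ^ (k + 1)))
      (add_left_injective _).injOn (fun p hp => ?_) (fun p hp => ?_) <;>
      obtain ⟨x, y, rfl⟩ := lift p <;>
      simp only [T, translate, mem_filter, mem_univ, true_and, map_intCast,
        intCast_sq_sub_mul_sq_eq_iff_dvd, Nat.cast_pow, Nat.cast_ofNat] at hp ⊢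
    · exact (Int.dvd_sq_sub_mul_sq_add_two_pow hd ha k hp).1
    · exact (Int.dvd_sq_sub_mul_sq_add_two_pow hd ha k hp).2
  omega

theorem solutionCount_four {d a : ℤ} (hd : d % 4 = 3) (ha : a % 4 = 1) :
    solutionCount d a (2 ^ 2) = 8 := by
  rw [solutionCount, ← ZMod.intCast_mod d, ← ZMod.intCast_mod a]
  simp only [Nat.reducePow, Nat.cast_ofNat, hd, ha]
  decide

theorem solutionCount_eq_zero {d a : ℤ} (hd : d % 4 = 3) (ha : a % 4 = 3) {n : ℕ} [NeZero n]
    (hn : 4 ∣ n) : solutionCount d a n = 0 := by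
  refine card_eq_zero.mpr (filter_eq_empty_iff.mpr fun p _ hp => ?_)
  have h4 := congrArg (ZMod.castHom hn (ZMod 4)) hp
  simp only [map_sub, map_mul, map_pow, map_intCast] at h4
  rw [← ZMod.intCast_mod d, ← ZMod.intCast_mod a] at h4
  simp only [Nat.cast_ofNat, hd, ha] at h4
  revert h4
  generalize ZMod.castHom hn (ZMod 4) p.1 = x
  generalize ZMod.castHom hn (ZMod 4) p.2 = y
  revert x y
  decide

theorem solutionCount_two_pow {d a : ℤ} (hd : d % 4 = 3) (ha : a % 4 = 1) (k : ℕ) :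
    solutionCount d a (2 ^ (k + 2)) = 2 ^ (k + 3) := by
  induction k with
  | zero => exact solutionCount_four hd ha
  | succ k ih =>
    rw [solutionCount_two_pow_add_three (Int.odd_iff.mpr (by omega)) (Int.odd_iff.mpr (by omega)),
      ih, pow_succ' 2 (k + 3)]

theorem ZMod.intCast_bijOn_Icc (N : ℕ) [NeZero N] :
    Set.BijOn (Int.cast : ℤ → ZMod N) (Set.Icc 1 N) Set.univ := by
  refine ⟨Set.mapsTo_univ _ _, fun x hx y hy hxy => ?_, fun z _ => ?_⟩
  · rw [ZMod.intCast_eq_intCast_iff_dvd_sub] at hxy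
    have := Int.eq_zero_of_abs_lt_dvd hxy (abs_sub_lt_iff.mpr ⟨by linarith [hx.1, hy.2],
      by linarith [hx.2, hy.1]⟩)
    linarith
  · refine ⟨if z = 0 then N else z.val, ?_, ?_⟩
    · split_ifs with hz
      · exact ⟨by exact_mod_cast NeZero.one_le, le_rfl⟩
      · exact ⟨by exact_mod_cast ZMod.val_pos.mpr hz, by exact_mod_cast (ZMod.val_lt z).le⟩
    · split_ifs with hz
      · rw [hz, Int.cast_natCast, ZMod.natCast_self]
      · rw [Int.cast_natCast, ZMod.natCast_zmod_val z]

theorem card_filter_Icc_prod_Icc_intCast (N : ℕ) [NeZero N] (P : ZMod N × ZMod N → Prop)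
    [DecidablePred P] :
    #{xy ∈ Icc (1 : ℤ) N ×ˢ Icc (1 : ℤ) N | P (xy.1, xy.2)} = #{p | P p} := by
  have h := (ZMod.intCast_bijOn_Icc N).prodMap (ZMod.intCast_bijOn_Icc N)
  refine card_nbij (Prod.map Int.cast Int.cast)
    (fun xy hxy => mem_filter.mpr ⟨mem_univ _, (mem_filter.mp hxy).2⟩)
    (h.injOn.mono fun xy hxy => ?_) fun p hp => ?_
  · obtain ⟨hx, hy⟩ := mem_product.mp (mem_filter.mp hxy).1
    exact ⟨mem_Icc.mp hx, mem_Icc.mp hy⟩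
  · obtain ⟨xy, ⟨hx, hy⟩, rfl⟩ :=
      h.surjOn (⟨trivial, trivial⟩ : p ∈ Set.univ ×ˢ Set.univ)
    exact ⟨xy, mem_filter.mpr ⟨mem_product.mpr ⟨mem_Icc.mpr hx, mem_Icc.mpr hy⟩,
      (mem_filter.mp hp).2⟩, rfl⟩

theorem card_filter_Icc_emod_eq_solutionCount (d a : ℤ) (N : ℕ) [NeZero N] :
    #{xy ∈ Icc (1 : ℤ) N ×ˢ Icc (1 : ℤ) N |
      (xy.1 ^ 2 - d * xy.2 ^ 2) % (N : ℤ) = a % (N : ℤ)} = solutionCount d a N := by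
  rw [solutionCount,
    ← card_filter_Icc_prod_Icc_intCast N (fun p => p.1 ^ 2 - d * p.2 ^ 2 = a)]
  refine congrArg card (filter_congr fun xy _ => ?_)
  rw [← ZMod.intCast_eq_intCast_iff']
  push_cast
  rfl

/-- Let `d ≡ -1 (mod 4)`, `a` odd, `e ≥ 2`. The number of pairs `(x,y)` mod `2^e`
with `x² - d y² ≡ a (mod 2^e)` is `2^{e+1}` if `a ≡ 1 (mod 4)` and `0` if
`a ≡ 3 (mod 4)`. -/
theorem stmt10 (d a : ℤ) (hd : d % 4 = 3) (ha : Odd a) (e : ℕ) (he : 2 ≤ e) :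
    ((Finset.Icc 1 (2 ^ e) ×ˢ Finset.Icc 1 (2 ^ e)).filter
        (fun xy => ((xy.1 : ℤ) ^ 2 - d * (xy.2 : ℤ) ^ 2) % ((2 : ℤ) ^ e)
          = a % ((2 : ℤ) ^ e))).card =
      if a % 4 = 1 then 2 ^ (e + 1) else 0 := by
  obtain ⟨k, rfl⟩ := Nat.exists_eq_add_of_le' he
  rw [show (2 : ℤ) ^ (k + 2) = ((2 ^ (k + 2) : ℕ) : ℤ) by push_cast; rfl,
    card_filter_Icc_emod_eq_solutionCount]
  split_ifs with ha1
  · exact solutionCount_two_pow hd ha1 k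
  · have := Int.odd_iff.mp ha
    exact solutionCount_eq_zero hd (by omega) (pow_dvd_pow 2 (by omega))
end

section
/- Let p be an odd prime dividing d = β² - 4αγ with p ∤ α and p ∤ a. Then for all e ≥ 1, R_a(p^e)/p^e = 1 + (αa/p), where R_a(p^e) counts pairs (x,y) mod p^e with αx² + βxy + γy² ≡ a mod p^e and (·/p) is the Legendre symbol. -/
/-!
Completing the square, `4α·Q(x, y) = (2αx + βy)² - d·y²`, turns the count for each fixed `y`
into the number of square roots of `c_y = 4αa + d·y²` modulo `p^e`. Since `p ∣ d`, we have
`c_y ≡ 4αa (mod p)`, a unit. Reduction `ZMod (p^e) → ZMod p` has nilpotent kernel, so a square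
root of `c_y` modulo `p` lifts by Newton's iteration (Hensel's lemma), and since `2` is a unit
the two lifts `±r` are the only square roots. Hence each of the `p^e` values of `y` contributes
`1 + (αa/p)` solutions.
-/

/-- `R_a(q)` counts `(x,y)` with `1 ≤ x,y ≤ q` and
`α x² + β x y + γ y² ≡ a (mod q)`. -/
def Rcount (α β γ a : ℤ) (q : ℕ) : ℕ :=
  ((Finset.Icc 1 q ×ˢ Finset.Icc 1 q).filter
    (fun xy => (α * (xy.1 : ℤ) ^ 2 + β * (xy.1 : ℤ) * (xy.2 : ℤ) + γ * (xy.2 : ℤ) ^ 2) % (q : ℤ)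
      = a % (q : ℤ))).card

open Finset Polynomial

section NilpotentKernel

variable {R F : Type*} [CommRing R] [Field F] {π : R →+* F}

theorem isUnit_of_map_ne_zero (hsurj : Function.Surjective π)
    (hnil : ∀ x, π x = 0 → IsNilpotent x) {x : R} (hx : π x ≠ 0) : IsUnit x := by
  obtain ⟨y, hy⟩ := hsurj (π x)⁻¹
  have hxy : IsNilpotent (x * y - 1) := hnil _ (by simp [hy, hx])
  exact isUnit_of_mul_isUnit_left (x := x) (y := y) (by simpa using hxy.isUnit_add_one)

theorem exists_sq_eq_of_isSquare_map (hsurj : Function.Surjective π)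
    (hnil : ∀ x, π x = 0 → IsNilpotent x) (h2 : (2 : F) ≠ 0) {c : R} (hc : π c ≠ 0)
    (hsq : IsSquare (π c)) : ∃ r, r ^ 2 = c := by
  obtain ⟨s, hs⟩ := hsq
  obtain ⟨x, rfl⟩ := hsurj s
  have hx : π x ≠ 0 := by rintro h; simp [h] at hs; exact hc hs
  obtain ⟨r, ⟨-, hr⟩, -⟩ := existsUnique_nilpotent_sub_and_aeval_eq_zero (P := X ^ 2 - C c)
    (x := x) (hnil _ (by simp [hs, sq]))
    (isUnit_of_map_ne_zero hsurj hnil (by simp [hx]; exact one_add_one_eq_two (R := F) ▸ h2))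
  exact ⟨r, by simpa [sub_eq_zero] using hr⟩

theorem sq_eq_sq_iff_of_map_ne_zero (hsurj : Function.Surjective π)
    (hnil : ∀ x, π x = 0 → IsNilpotent x) (h2 : (2 : F) ≠ 0) {r : R} (hr : π r ≠ 0)
    (u : R) : u ^ 2 = r ^ 2 ↔ u = r ∨ u = -r := by
  refine ⟨fun h => ?_, by rintro (rfl | rfl) <;> ring⟩
  have hu : π u ≠ 0 := fun hu => hr (by simpa [hu] using (congrArg π h).symm)
  have hprod : (u - r) * (u + r) = 0 := by linear_combination h
  have hsum : π (u - r) + π (u + r) = 2 * π u := by simp only [map_sub, map_add]; ring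
  by_cases hplus : π (u + r) = 0
  · have hminus : π (u - r) ≠ 0 := by
      intro hminus
      rw [hminus, hplus, zero_add] at hsum
      exact mul_ne_zero h2 hu hsum.symm
    right
    exact eq_neg_of_add_eq_zero_left
      ((isUnit_of_map_ne_zero hsurj hnil hminus).mul_right_eq_zero.mp hprod)
  · left
    exact sub_eq_zero.mp ((isUnit_of_map_ne_zero hsurj hnil hplus).mul_left_eq_zero.mp hprod)

theorem card_filter_sq_eq_of_map_ne_zero [Fintype R] [DecidableEq R] [Fintype F] [DecidableEq F]
    (hsurj : Function.Surjective π) (hnil : ∀ x, π x = 0 → IsNilpotent x)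
    (hF : ringChar F ≠ 2) {c : R} (hc : π c ≠ 0) :
    (#{u | u ^ 2 = c} : ℤ) = 1 + quadraticChar F (π c) := by
  have h2 : (2 : F) ≠ 0 := Ring.two_ne_zero hF
  by_cases hsq : IsSquare (π c)
  · rw [(quadraticChar_one_iff_isSquare hc).mpr hsq]
    obtain ⟨r, rfl⟩ := exists_sq_eq_of_isSquare_map hsurj hnil h2 hc hsq
    have hr : π r ≠ 0 := by simpa using hc
    have hne : r ≠ -r := fun h =>
      mul_ne_zero h2 hr (by simpa [two_mul] using congrArg π (eq_neg_iff_add_eq_zero.mp h))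
    have hroots : ({u | u ^ 2 = r ^ 2} : Finset R) = {r, -r} := by
      ext u
      simp [sq_eq_sq_iff_of_map_ne_zero hsurj hnil h2 hr]
    rw [hroots, card_pair hne]
    norm_num
  · rw [quadraticChar_neg_one_iff_not_isSquare.mpr hsq, filter_eq_empty_iff.mpr]
    · simp
    · exact fun u _ hu => hsq ⟨π u, by rw [← hu, map_pow, sq]⟩

end NilpotentKernel

theorem ZMod.isNilpotent_of_castHom_eq_zero {p e : ℕ} [NeZero p] (he : e ≠ 0) {x : ZMod (p ^ e)}
    (hx : ZMod.castHom (dvd_pow_self p he) (ZMod p) x = 0) : IsNilpotent x := by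
  rw [← ZMod.natCast_zmod_val x, map_natCast, ZMod.natCast_eq_zero_iff] at hx
  obtain ⟨k, hk⟩ := hx
  refine ⟨e, ?_⟩
  rw [← ZMod.natCast_zmod_val x, hk, Nat.cast_mul, mul_pow, ← Nat.cast_pow, ZMod.natCast_self,
    zero_mul]

theorem ZMod.isUnit_of_castHom_ne_zero {p e : ℕ} [Fact p.Prime] (he : e ≠ 0) {x : ZMod (p ^ e)}
    (hx : ZMod.castHom (dvd_pow_self p he) (ZMod p) x ≠ 0) : IsUnit x :=
  isUnit_of_map_ne_zero (ZMod.castHom_surjective _)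
    (fun _ => isNilpotent_of_castHom_eq_zero he) hx

theorem ZMod.card_filter_sq_eq_of_castHom_ne_zero {p e : ℕ} [Fact p.Prime] (hp2 : p ≠ 2)
    (he : e ≠ 0) {c : ZMod (p ^ e)} (hc : ZMod.castHom (dvd_pow_self p he) (ZMod p) c ≠ 0) :
    (#{u | u ^ 2 = c} : ℤ) =
      1 + quadraticChar (ZMod p) (ZMod.castHom (dvd_pow_self p he) (ZMod p) c) :=
  card_filter_sq_eq_of_map_ne_zero (ZMod.castHom_surjective _)
    (fun _ => isNilpotent_of_castHom_eq_zero he) (by rwa [ZMod.ringChar_zmod_n]) hc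

theorem card_filter_prod_eq_sum {X Y : Type*} [Fintype X] [Fintype Y] (P : X → Y → Prop)
    [∀ x y, Decidable (P x y)] : #{z : X × Y | P z.1 z.2} = ∑ y, #{x | P x y} := by
  simp only [card_filter, Fintype.sum_prod_type_right]

section QuadraticForm

variable {R : Type*} [CommRing R] [Fintype R] [DecidableEq R]

/-- Completing the square: `4α(αx² + βxy + γy²) = (2αx + βy)² - (β² - 4αγ)y²`. -/
theorem card_filter_quadForm_eq_card_filter_sq (α β γ a y : R) (hα : IsUnit (2 * α)) :
    #{x | α * x ^ 2 + β * x * y + γ * y ^ 2 = a} =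
      #{u | u ^ 2 = 4 * α * a + (β ^ 2 - 4 * α * γ) * y ^ 2} := by
  have h4α : IsUnit (4 * α) := by
    have h2 : IsUnit (2 : R) := isUnit_of_mul_isUnit_left hα
    simpa [← mul_assoc, show (2 : R) * 2 = 4 by norm_num] using h2.mul hα
  refine card_equiv ((Units.mulLeft hα.unit).trans (Equiv.addRight (β * y))) fun x => ?_
  simp only [mem_filter, mem_univ, true_and, Equiv.trans_apply, Units.mulLeft_apply,
    IsUnit.unit_spec, Equiv.coe_addRight]
  rw [← h4α.mul_right_inj]
  constructor <;> intro h <;> linear_combination h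

end QuadraticForm

theorem ZMod.natCast_injOn_Icc (q : ℕ) : Set.InjOn (Nat.cast : ℕ → ZMod q) (Icc 1 q) := by
  intro x hx y hy h
  simp only [coe_Icc, Set.mem_Icc] at hx hy
  rw [ZMod.natCast_eq_natCast_iff'] at h
  rcases hx.2.eq_or_lt with rfl | hxq <;> rcases hy.2.eq_or_lt with rfl | hyq
  all_goals simp_all [Nat.mod_eq_of_lt]
  all_goals omega

theorem ZMod.card_filter_Icc_prod (q : ℕ) [NeZero q] (P : ZMod q → ZMod q → Prop)
    [∀ x y, Decidable (P x y)] :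
    #{xy ∈ Icc 1 q ×ˢ Icc 1 q | P xy.1 xy.2} = #{z : ZMod q × ZMod q | P z.1 z.2} := by
  set f : ℕ × ℕ → ZMod q × ZMod q := fun xy => ((xy.1 : ZMod q), (xy.2 : ZMod q))
  have hinj : Set.InjOn f ↑(Icc 1 q ×ˢ Icc 1 q) := by
    rw [coe_product]
    exact (natCast_injOn_Icc q).prodMap (natCast_injOn_Icc q)
  have himage : (Icc 1 q ×ˢ Icc 1 q).image f = univ := by
    apply eq_univ_of_card
    rw [card_image_of_injOn hinj]
    simp
  rw [← himage, filter_image, card_image_of_injOn (hinj.mono (filter_subset _ _))]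

theorem Rcount_eq_card_zmod (α β γ a : ℤ) (q : ℕ) [NeZero q] :
    Rcount α β γ a q = #{z : ZMod q × ZMod q |
      (α : ZMod q) * z.1 ^ 2 + β * z.1 * z.2 + γ * z.2 ^ 2 = a} := by
  rw [Rcount, ← ZMod.card_filter_Icc_prod q fun x y =>
    (α : ZMod q) * x ^ 2 + β * x * y + γ * y ^ 2 = a]
  congr 1
  refine filter_congr fun xy _ => ?_
  rw [← ZMod.intCast_eq_intCast_iff']
  push_cast
  rfl

theorem ZMod.card_filter_quadForm_eq_of_dvd_discr {p e : ℕ} [Fact p.Prime] (hp2 : p ≠ 2)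
    (he : e ≠ 0) {α β γ a : ℤ} (hpd : (p : ℤ) ∣ β ^ 2 - 4 * α * γ)
    (hpα : ¬ (p : ℤ) ∣ α) (hpa : ¬ (p : ℤ) ∣ a) :
    (#{z : ZMod (p ^ e) × ZMod (p ^ e) |
        (α : ZMod (p ^ e)) * z.1 ^ 2 + β * z.1 * z.2 + γ * z.2 ^ 2 = a} : ℤ) =
      p ^ e * (1 + legendreSym p (α * a)) := by
  set π := ZMod.castHom (dvd_pow_self p he) (ZMod p)
  have h2 : (2 : ZMod p) ≠ 0 := Ring.two_ne_zero (by rwa [ZMod.ringChar_zmod_n])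
  have hα : (α : ZMod p) ≠ 0 := by rwa [Ne, ZMod.intCast_zmod_eq_zero_iff_dvd]
  have ha : (a : ZMod p) ≠ 0 := by rwa [Ne, ZMod.intCast_zmod_eq_zero_iff_dvd]
  have hD : (β : ZMod p) ^ 2 - 4 * α * γ = 0 := by
    exact_mod_cast (ZMod.intCast_zmod_eq_zero_iff_dvd _ p).mpr hpd
  have h2α : IsUnit (2 * (α : ZMod (p ^ e))) := ZMod.isUnit_of_castHom_ne_zero he <| by
    simpa only [map_mul, map_ofNat, map_intCast] using mul_ne_zero h2 hα
  have hfiber (y : ZMod (p ^ e)) :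
      (#{u | u ^ 2 = 4 * α * a + (β ^ 2 - 4 * α * γ) * y ^ 2} : ℤ) =
        1 + legendreSym p (α * a) := by
    have hc :
        π (4 * α * a + (β ^ 2 - 4 * α * γ) * y ^ 2) = 2 ^ 2 * ((α * a : ℤ) : ZMod p) := by
      simp only [map_add, map_mul, map_sub, map_pow, map_ofNat, map_intCast, Int.cast_mul]
      linear_combination π y ^ 2 * hD
    rw [ZMod.card_filter_sq_eq_of_castHom_ne_zero hp2 he (by rw [hc]; simp [h2, hα, ha]), hc,
      map_mul, quadraticChar_sq_one' h2, one_mul, legendreSym]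
  rw [card_filter_prod_eq_sum fun x y => (α : ZMod (p ^ e)) * x ^ 2 + β * x * y + γ * y ^ 2 = a,
    Nat.cast_sum]
  simp only [card_filter_quadForm_eq_card_filter_sq _ _ _ _ _ h2α, hfiber, sum_const, card_univ,
    ZMod.card]
  ring

theorem stmt11_general (α β γ a : ℤ)
    (p : ℕ) (hp : p.Prime) (hp2 : p ≠ 2)
    (hpd : (p : ℤ) ∣ β ^ 2 - 4 * α * γ)
    (hpα : ¬ (p : ℤ) ∣ α) (hpa : ¬ (p : ℤ) ∣ a)
    (e : ℕ) (he : 1 ≤ e) :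
    (Rcount α β γ a (p ^ e) : ℝ) / (p : ℝ) ^ e = 1 + (jacobiSym (α * a) p : ℝ) := by
  have : Fact p.Prime := ⟨hp⟩
  have : NeZero (p ^ e) := ⟨pow_ne_zero e hp.ne_zero⟩
  have hcount :=
    ZMod.card_filter_quadForm_eq_of_dvd_discr hp2 (Nat.one_le_iff_ne_zero.mp he) hpd hpα hpa
  rw [← Rcount_eq_card_zmod, jacobiSym.legendreSym.to_jacobiSym] at hcount
  rw [div_eq_iff (by exact_mod_cast (pow_pos hp.pos e).ne')]
  exact_mod_cast hcount.trans (mul_comm _ _)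

/-- If `p` is an odd prime dividing `d = β² - 4αγ` with `p ∤ α`, `p ∤ a`, then for
all `e ≥ 1`, `R_a(p^e)/p^e = 1 + (αa/p)`. -/
theorem stmt11 (α β γ a : ℤ) (hprim : Int.gcd (Int.gcd α β) γ = 1)
    (p : ℕ) (hp : p.Prime) (hp2 : p ≠ 2)
    (hpd : (p : ℤ) ∣ β ^ 2 - 4 * α * γ)
    (hpα : ¬ (p : ℤ) ∣ α) (hpa : ¬ (p : ℤ) ∣ a)
    (e : ℕ) (he : 1 ≤ e) :
    (Rcount α β γ a (p ^ e) : ℝ) / (p : ℝ) ^ e = 1 + (jacobiSym (α * a) p : ℝ) :=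
  stmt11_general α β γ a p hp hp2 hpd hpα hpa e he
end

section
/- Define the multiplicative function h on prime powers by h(p^e) = 1/p if p ≡ 3 mod 4 and e odd, and h(p^e) = 1 otherwise. Then for the indicator a(n) of sums of two squares, A_d(x) := Σ_{n ≤ x, d | n} a(n) satisfies A_d(x) = A(h(d)x/d), i.e. counting n ≤ x divisible by d that are sums of two squares is the same as counting m ≤ h(d)x/d that are sums of two squares. -/
/-!
Let `k` be the product of the primes `p ≡ 3 (mod 4)` dividing `d` to an odd power, so that
`h(d) = 1/k`. A sum of two squares divisible by `d` is divisible by `dk`: its exponent at each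
such `p` is even, hence strictly larger than that of `d`. Since `dk` is itself a sum of two
squares, `dk·m` is one if and only if `m` is, so `m ↦ dk·m` matches the sums of two squares
`m ≤ x/(dk)` with those `n ≤ x` divisible by `d`.
-/

open Classical in
/-- `A(x)`: the number of `1 ≤ n ≤ x` expressible as a sum of two squares. -/
noncomputable def A16 (x : ℝ) : ℕ :=
  ((Finset.Icc 1 ⌊x⌋₊).filter (fun n => ∃ u v : ℕ, n = u ^ 2 + v ^ 2)).card

open Classical in
/-- `A_d(x)`: the number of `1 ≤ n ≤ x` divisible by `d` and expressible as a sum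
of two squares. -/
noncomputable def A16d (d : ℕ) (x : ℝ) : ℕ :=
  ((Finset.Icc 1 ⌊x⌋₊).filter (fun n => d ∣ n ∧ ∃ u v : ℕ, n = u ^ 2 + v ^ 2)).card

/-- The multiplicative function `h` with `h(p^e) = 1/p` if `p ≡ 3 (mod 4)` and `e`
odd, `h(p^e) = 1` otherwise. -/
noncomputable def h16 (d : ℕ) : ℝ :=
  ∏ p ∈ d.primeFactors,
    if p % 4 = 3 ∧ Odd (d.factorization p) then ((p : ℝ))⁻¹ else 1

open Finset

namespace Nat

theorem eq_sq_add_sq_iff_even_factorization {n : ℕ} :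
    (∃ u v : ℕ, n = u ^ 2 + v ^ 2) ↔ ∀ q, q % 4 = 3 → Even (n.factorization q) := by
  rw [eq_sq_add_sq_iff]
  refine ⟨fun H q hq4 => ?_, fun H q hq hq4 => ?_⟩
  · by_cases hq : q ∈ n.primeFactors
    · rw [factorization_def _ (prime_of_mem_primeFactors hq)]
      exact H q hq hq4
    · rw [← support_factorization, Finsupp.notMem_support_iff] at hq
      simp [hq]
  · rw [← factorization_def _ (prime_of_mem_primeFactors hq)]
    exact H q hq4

theorem eq_sq_add_sq_mul_iff {D : ℕ} (hD : D ≠ 0) (hDsq : ∃ u v : ℕ, D = u ^ 2 + v ^ 2)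
    (m : ℕ) : (∃ u v : ℕ, D * m = u ^ 2 + v ^ 2) ↔ ∃ u v : ℕ, m = u ^ 2 + v ^ 2 := by
  rcases eq_or_ne m 0 with rfl | hm
  · exact ⟨fun _ => ⟨0, 0, rfl⟩, fun _ => ⟨0, 0, by simp⟩⟩
  rw [eq_sq_add_sq_iff_even_factorization] at hDsq
  simp only [eq_sq_add_sq_iff_even_factorization, factorization_mul hD hm, Finsupp.add_apply]
  exact forall₂_congr fun q hq4 => even_add.trans (iff_true_left (hDsq q hq4))

theorem card_filter_dvd_and {D : ℕ} (hD : D ≠ 0) (N : ℕ) (P : ℕ → Prop) [DecidablePred P] :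
    #{n ∈ Icc 1 N | D ∣ n ∧ P n} = #{m ∈ Icc 1 (N / D) | P (D * m)} := by
  rw [← Finset.card_image_of_injective {m ∈ Icc 1 (N / D) | P (D * m)} (mul_right_injective₀ hD)]
  congr 1
  ext n
  simp only [mem_filter, mem_Icc, mem_image]
  constructor
  · rintro ⟨⟨hn1, hnN⟩, ⟨m, rfl⟩, hP⟩
    refine ⟨m, ⟨⟨Nat.pos_of_mul_pos_left hn1, ?_⟩, hP⟩, rfl⟩
    rwa [le_div_iff_mul_le (pos_of_ne_zero hD), mul_comm]
  · rintro ⟨m, ⟨⟨hm1, hmN⟩, hP⟩, rfl⟩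
    refine ⟨⟨mul_pos (pos_of_ne_zero hD) hm1, ?_⟩, dvd_mul_right D m, hP⟩
    rwa [le_div_iff_mul_le (pos_of_ne_zero hD), mul_comm] at hmN

end Nat

def oddThreeModFourPrimes (d : ℕ) : Finset ℕ :=
  {p ∈ d.primeFactors | p % 4 = 3 ∧ Odd (d.factorization p)}

def oddThreeModFourRadical (d : ℕ) : ℕ :=
  ∏ p ∈ oddThreeModFourPrimes d, p

theorem mem_oddThreeModFourPrimes {d q : ℕ} :
    q ∈ oddThreeModFourPrimes d ↔ q % 4 = 3 ∧ Odd (d.factorization q) := by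
  rw [oddThreeModFourPrimes, mem_filter, ← Nat.support_factorization, Finsupp.mem_support_iff]
  exact and_iff_right_of_imp fun h => h.2.pos.ne'

theorem prime_of_mem_oddThreeModFourPrimes {d p : ℕ} (hp : p ∈ oddThreeModFourPrimes d) :
    p.Prime :=
  Nat.prime_of_mem_primeFactors (mem_filter.mp hp).1

theorem oddThreeModFourRadical_ne_zero (d : ℕ) : oddThreeModFourRadical d ≠ 0 :=
  prod_ne_zero_iff.mpr fun _ hp => (prime_of_mem_oddThreeModFourPrimes hp).ne_zero

theorem factorization_oddThreeModFourRadical (d q : ℕ) :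
    (oddThreeModFourRadical d).factorization q = if q ∈ oddThreeModFourPrimes d then 1 else 0 := by
  rw [oddThreeModFourRadical, Nat.factorization_prod
    fun p hp => (prime_of_mem_oddThreeModFourPrimes hp).ne_zero, Finset.sum_apply',
    sum_congr rfl fun p hp => by
    rw [(prime_of_mem_oddThreeModFourPrimes hp).factorization, Finsupp.single_apply]]
  exact sum_ite_eq' _ q fun _ => 1

theorem h16_eq_inv_oddThreeModFourRadical (d : ℕ) :
    h16 d = (oddThreeModFourRadical d : ℝ)⁻¹ := by
  rw [h16, ← prod_filter, oddThreeModFourRadical, Nat.cast_prod, prod_inv_distrib]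
  rfl

theorem eq_sq_add_sq_mul_oddThreeModFourRadical {d : ℕ} (hd : d ≠ 0) :
    ∃ u v : ℕ, d * oddThreeModFourRadical d = u ^ 2 + v ^ 2 := by
  rw [Nat.eq_sq_add_sq_iff_even_factorization]
  intro q hq4
  rw [Nat.factorization_mul hd (oddThreeModFourRadical_ne_zero d), Finsupp.add_apply,
    factorization_oddThreeModFourRadical]
  split_ifs with hq
  · exact (mem_oddThreeModFourPrimes.mp hq).2.add_one
  · rw [mem_oddThreeModFourPrimes] at hq
    simpa [hq4] using hq

theorem mul_oddThreeModFourRadical_dvd_iff {d n : ℕ} (hd : d ≠ 0) (hn : n ≠ 0)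
    (hnsq : ∃ u v : ℕ, n = u ^ 2 + v ^ 2) : d * oddThreeModFourRadical d ∣ n ↔ d ∣ n := by
  refine ⟨dvd_of_mul_right_dvd, fun hdn => ?_⟩
  rw [← Nat.factorization_le_iff_dvd (mul_ne_zero hd (oddThreeModFourRadical_ne_zero d)) hn]
  rw [← Nat.factorization_le_iff_dvd hd hn] at hdn
  rw [Nat.eq_sq_add_sq_iff_even_factorization] at hnsq
  intro q
  rw [Nat.factorization_mul hd (oddThreeModFourRadical_ne_zero d), Finsupp.add_apply,
    factorization_oddThreeModFourRadical]
  split_ifs with hq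
  · rw [mem_oddThreeModFourPrimes] at hq
    have hne : d.factorization q ≠ n.factorization q := fun h =>
      Nat.not_even_iff_odd.mpr hq.2 (h ▸ hnsq q hq.1)
    have := hdn q
    omega
  · simpa using hdn q

/-- `A_d(x) = A(h(d) x / d)` for the sums-of-two-squares sequence. -/
theorem stmt16 (d : ℕ) (hd : 0 < d) (x : ℝ) :
    A16d d x = A16 (h16 d * x / d) := by
  set D := d * oddThreeModFourRadical d
  have hD : D ≠ 0 := mul_ne_zero hd.ne' (oddThreeModFourRadical_ne_zero d)
  have harg : h16 d * x / d = x / (D : ℝ) := by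
    rw [h16_eq_inv_oddThreeModFourRadical, Nat.cast_mul]
    field_simp
  rw [A16d, A16, harg, Nat.floor_div_natCast]
  calc _ = #{n ∈ Icc 1 ⌊x⌋₊ | D ∣ n ∧ ∃ u v : ℕ, n = u ^ 2 + v ^ 2} := by
        refine congrArg card (filter_congr fun n hn => and_congr_left fun hsq => ?_)
        have hn0 : n ≠ 0 := Nat.one_le_iff_ne_zero.mp (mem_Icc.mp hn).1
        exact (mul_oddThreeModFourRadical_dvd_iff hd.ne' hn0 hsq).symm
    _ = #{m ∈ Icc 1 (⌊x⌋₊ / D) | ∃ u v : ℕ, D * m = u ^ 2 + v ^ 2} :=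
        Nat.card_filter_dvd_and hD _ _
    _ = _ := congrArg card (filter_congr fun m _ =>
        Nat.eq_sq_add_sq_mul_iff hD (eq_sq_add_sq_mul_oddThreeModFourRadical hd.ne') m)
end

section
/- For the sequence of integers free of prime factors < y, the Dirichlet series Σ_{n ≥ 1, (n,a)=1} 1/(n^{s+1} γ_y(n)) equals ζ(s+1) · ∏_{p | a}(1 - 1/p^{s+1}) · ∏_{p ∤ a, p < y}(1 + 1/((p-1)p^{s+1})), where γ_y(n) := ∏_{p | n, p < y}(1 - 1/p). -/
/-!
Let `S` be the set of primes that divide `a` or lie below `y`, and put `w p = -1` for `p ∣ a`,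
`w p = 1/(p-1)` otherwise. For `n ≠ 0` the weight `[(n,a) = 1] / γ_y(n)` equals
`∏_{p ∈ S, p ∣ n} (1 + w p) = ∑_{T ⊆ S, ∏ T ∣ n} ∏_{p ∈ T} w p`. Hence the summand `n^{-t}` times
this weight is the finite combination `∑_{T ⊆ S} c_T [d_T ∣ n] (n / d_T)^{-t}` of dilated zeta
series, with `d_T = ∏ T` and `c_T = ∏_{p ∈ T} w p p^{-t}`. Summing term by term gives
`ζ(t) ∑_T c_T = ζ(t) ∏_{p ∈ S} (1 + w p p^{-t})`, so no infinite Euler product is needed.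
-/

/-- `γ_y(n) = ∏_{p ∣ n, p < y} (1 - 1/p)`. -/
noncomputable def gammaY (y n : ℕ) : ℝ :=
  ∏ p ∈ n.primeFactors.filter (fun p => p < y), (1 - 1 / (p : ℝ))

/-- Real zeta function `ζ(t) = ∑ n⁻ᵗ` (the `n = 0` term vanishes). -/
noncomputable def zetaR (t : ℝ) : ℝ := ∑' n : ℕ, ((n : ℝ) ^ t)⁻¹

open Finset

lemma filter_powerset_prod_dvd {S : Finset ℕ} (hS : ∀ p ∈ S, p.Prime) (n : ℕ) :
    {T ∈ S.powerset | (∏ p ∈ T, p) ∣ n} = {p ∈ S | p ∣ n}.powerset := by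
  ext T
  simp only [mem_filter, mem_powerset]
  constructor
  · rintro ⟨hTS, hdvd⟩ p hp
    exact mem_filter.2 ⟨hTS hp, (dvd_prod_of_mem _ hp).trans hdvd⟩
  · intro hT
    refine ⟨hT.trans (filter_subset _ _), prod_primes_dvd n ?_ fun p hp => (mem_filter.1 (hT hp)).2⟩
    exact fun p hp => (hS p (mem_filter.1 (hT hp)).1).prime

lemma sum_powerset_filter_prod_dvd {R : Type*} [CommSemiring R] {S : Finset ℕ}
    (hS : ∀ p ∈ S, p.Prime) (w : ℕ → R) (n : ℕ) :
    ∑ T ∈ S.powerset with (∏ p ∈ T, p) ∣ n, ∏ p ∈ T, w p = ∏ p ∈ S with p ∣ n, (1 + w p) := by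
  rw [filter_powerset_prod_dvd hS, prod_one_add]

lemma HasSum.ite_dvd_div {α : Type*} [AddCommMonoid α] [TopologicalSpace α] {f : ℕ → α} {a : α}
    (hf : HasSum f a) {d : ℕ} (hd : 0 < d) :
    HasSum (fun n => if d ∣ n then f (n / d) else 0) a := by
  refine (Function.Injective.hasSum_iff (g := (d * ·)) (mul_right_injective₀ hd.ne') ?_).1 ?_
  · rintro n hn
    rw [if_neg]
    rintro ⟨m, rfl⟩
    exact hn ⟨m, rfl⟩
  · convert hf using 1
    ext m
    simp only [Function.comp_apply, dvd_mul_right, if_true, Nat.mul_div_cancel_left m hd]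

lemma inv_rpow_natCast_div {n d : ℕ} (hd : d ≠ 0) (h : d ∣ n) (t : ℝ) :
    (((n / d : ℕ) : ℝ) ^ t)⁻¹ = ((n : ℝ) ^ t)⁻¹ * (d : ℝ) ^ t := by
  rw [Nat.cast_div h (by exact_mod_cast hd), Real.div_rpow (by positivity) (by positivity), inv_div,
    div_eq_inv_mul]

theorem hasSum_rpow_inv_mul_prod_filter_dvd {S : Finset ℕ} (hS : ∀ p ∈ S, p.Prime) (w : ℕ → ℝ)
    {t : ℝ} (ht : 1 < t) :
    HasSum (fun n : ℕ => ((n : ℝ) ^ t)⁻¹ * ∏ p ∈ S with p ∣ n, (1 + w p))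
      (zetaR t * ∏ p ∈ S, (1 + w p * ((p : ℝ) ^ t)⁻¹)) := by
  have hζ : HasSum (fun n : ℕ => ((n : ℝ) ^ t)⁻¹) (zetaR t) :=
    (Real.summable_nat_rpow_inv.2 ht).hasSum
  have hT : ∀ T ∈ S.powerset, HasSum
      (fun n => (∏ p ∈ T, w p * ((p : ℝ) ^ t)⁻¹) *
        if (∏ p ∈ T, p) ∣ n then (((n / ∏ p ∈ T, p : ℕ) : ℝ) ^ t)⁻¹ else 0)
      ((∏ p ∈ T, w p * ((p : ℝ) ^ t)⁻¹) * zetaR t) := fun T hT =>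
    (hζ.ite_dvd_div (prod_pos fun p hp => (hS p (mem_powerset.1 hT hp)).pos)).mul_left _
  convert hasSum_sum hT using 1
  · ext n
    rw [← sum_powerset_filter_prod_dvd hS, mul_sum, sum_filter]
    refine sum_congr rfl fun T hT => ?_
    split_ifs with h
    · have hT := mem_powerset.1 hT
      rw [inv_rpow_natCast_div (prod_pos fun p hp => (hS p (hT hp)).pos).ne' h, Nat.cast_prod,
        ← Real.finsetProd_rpow _ _ (fun p _ => by positivity), prod_mul_distrib, prod_inv_distrib]
      have : ∏ p ∈ T, (p : ℝ) ^ t ≠ 0 :=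
        prod_ne_zero_iff.2 fun p hp => by have := (hS p (hT hp)).pos; positivity
      field_simp
    · simp
  · rw [mul_comm, prod_one_add, sum_mul]

def sieveSupport (a y : ℕ) : Finset ℕ :=
  a.primeFactors ∪ {p ∈ range y | p.Prime ∧ ¬ p ∣ a}

noncomputable def sieveWeight (a p : ℕ) : ℝ := if p ∣ a then -1 else ((p : ℝ) - 1)⁻¹

section Sieve

variable {a y : ℕ}

lemma prime_of_mem_sieveSupport {p : ℕ} (hp : p ∈ sieveSupport a y) : p.Prime := by
  rcases mem_union.1 hp with h | h
  · exact Nat.prime_of_mem_primeFactors h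
  · exact (mem_filter.1 h).2.1

lemma prod_sieveSupport_one_add_mul (t : ℝ) :
    ∏ p ∈ sieveSupport a y, (1 + sieveWeight a p * ((p : ℝ) ^ t)⁻¹) =
      (∏ p ∈ a.primeFactors, (1 - ((p : ℝ) ^ t)⁻¹)) *
        ∏ p ∈ range y with p.Prime ∧ ¬ p ∣ a, (1 + (((p : ℝ) - 1) * (p : ℝ) ^ t)⁻¹) := by
  have hdisj : Disjoint a.primeFactors {p ∈ range y | p.Prime ∧ ¬ p ∣ a} :=
    disjoint_left.2 fun p hp hq => (mem_filter.1 hq).2.2 (Nat.dvd_of_mem_primeFactors hp)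
  rw [sieveSupport, prod_union hdisj]
  congr 1 <;> refine prod_congr rfl fun p hp => ?_
  · rw [sieveWeight, if_pos (Nat.dvd_of_mem_primeFactors hp)]
    ring
  · rw [sieveWeight, if_neg (mem_filter.1 hp).2.2, mul_inv]

lemma prod_sieveSupport_filter_dvd_of_coprime {n : ℕ} (hn : n ≠ 0) (h : n.Coprime a) :
    ∏ p ∈ sieveSupport a y with p ∣ n, (1 + sieveWeight a p) = (gammaY y n)⁻¹ := by
  have hpa : ∀ p ∈ n.primeFactors, ¬ p ∣ a := fun p hp hpa =>
    (Nat.prime_of_mem_primeFactors hp).one_lt.ne'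
      (Nat.eq_one_of_dvd_coprimes h (Nat.dvd_of_mem_primeFactors hp) hpa)
  have hfilter : {p ∈ sieveSupport a y | p ∣ n} = {p ∈ n.primeFactors | p < y} := by
    ext p
    simp only [sieveSupport, mem_filter, mem_union, mem_range]
    constructor
    · rintro ⟨hpa' | hpy, hpn⟩
      · have hpn : p ∈ n.primeFactors :=
          Nat.mem_primeFactors.2 ⟨Nat.prime_of_mem_primeFactors hpa', hpn, hn⟩
        exact absurd (Nat.dvd_of_mem_primeFactors hpa') (hpa p hpn)
      · exact ⟨Nat.mem_primeFactors.2 ⟨hpy.2.1, hpn, hn⟩, hpy.1⟩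
    · rintro ⟨hpn, hpy⟩
      refine ⟨Or.inr ⟨hpy, Nat.prime_of_mem_primeFactors hpn, hpa p hpn⟩, ?_⟩
      exact Nat.dvd_of_mem_primeFactors hpn
  rw [hfilter, gammaY, ← prod_inv_distrib]
  refine prod_congr rfl fun p hp => ?_
  have hpn := (mem_filter.1 hp).1
  rw [sieveWeight, if_neg (hpa p hpn)]
  have : (1 : ℝ) < p := by exact_mod_cast (Nat.prime_of_mem_primeFactors hpn).one_lt
  have : (p : ℝ) - 1 ≠ 0 := by linarith
  field_simp
  ring

lemma prod_sieveSupport_filter_dvd_of_not_coprime (ha : a ≠ 0) {n : ℕ} (h : ¬ n.Coprime a) :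
    ∏ p ∈ sieveSupport a y with p ∣ n, (1 + sieveWeight a p) = 0 := by
  obtain ⟨p, hp, hpd⟩ := Nat.exists_prime_and_dvd h
  have hpa : p ∣ a := hpd.trans (Nat.gcd_dvd_right _ _)
  have hmem : p ∈ sieveSupport a y := mem_union_left _ (Nat.mem_primeFactors.2 ⟨hp, hpa, ha⟩)
  refine prod_eq_zero (mem_filter.2 ⟨hmem, hpd.trans (Nat.gcd_dvd_left _ _)⟩) ?_
  rw [sieveWeight, if_pos hpa]
  ring

end Sieve

theorem stmt18_general (a : ℤ) (ha : a ≠ 0) (y : ℕ) (s : ℝ) (hs : 0 < s) :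
    ∑' n : {n : ℕ // 0 < n ∧ Nat.gcd n a.natAbs = 1},
        ((((n : ℕ) : ℝ) ^ (s + 1) * gammaY y n)⁻¹) =
      zetaR (s + 1) * (∏ p ∈ a.natAbs.primeFactors, (1 - ((p : ℝ) ^ (s + 1))⁻¹)) *
        ∏ p ∈ (Finset.range y).filter (fun p => p.Prime ∧ ¬ p ∣ a.natAbs),
          (1 + (((p : ℝ) - 1) * (p : ℝ) ^ (s + 1))⁻¹) := by
  have hsum := hasSum_rpow_inv_mul_prod_filter_dvd (S := sieveSupport a.natAbs y)
    (fun _ => prime_of_mem_sieveSupport) (sieveWeight a.natAbs) (by linarith : 1 < s + 1)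
  rw [prod_sieveSupport_one_add_mul, ← mul_assoc] at hsum
  refine (_root_.tsum_subtype {n : ℕ | 0 < n ∧ n.Coprime a.natAbs}
    fun n => ((n : ℝ) ^ (s + 1) * gammaY y n)⁻¹).trans ?_
  rw [← hsum.tsum_eq]
  refine tsum_congr fun n => ?_
  rcases Nat.eq_zero_or_pos n with rfl | hn
  · simp [Real.zero_rpow (by linarith : s + 1 ≠ 0)]
  by_cases hcop : n.Coprime a.natAbs
  · rw [Set.indicator_of_mem (s := {n | 0 < n ∧ n.Coprime a.natAbs}) ⟨hn, hcop⟩,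
      prod_sieveSupport_filter_dvd_of_coprime hn.ne' hcop, mul_inv]
  · rw [Set.indicator_of_notMem (fun h => hcop h.2),
      prod_sieveSupport_filter_dvd_of_not_coprime (Int.natAbs_ne_zero.2 ha) hcop, mul_zero]

/-- Euler product identity: for `Re s > 0`,
`∑_{n ≥ 1, (n,a)=1} 1/(n^{s+1} γ_y(n)) =
  ζ(s+1) ∏_{p ∣ a} (1 - p^{-(s+1)}) ∏_{p ∤ a, p < y} (1 + 1/((p-1) p^{s+1}))`. -/
theorem stmt18 (a : ℤ) (ha : a ≠ 0) (y : ℕ) (hy : 2 ≤ y) (s : ℝ) (hs : 0 < s) :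
    ∑' n : {n : ℕ // 0 < n ∧ Nat.gcd n a.natAbs = 1},
        ((((n : ℕ) : ℝ) ^ (s + 1) * gammaY y n)⁻¹) =
      zetaR (s + 1) * (∏ p ∈ a.natAbs.primeFactors, (1 - ((p : ℝ) ^ (s + 1))⁻¹)) *
        ∏ p ∈ (Finset.range y).filter (fun p => p.Prime ∧ ¬ p ∣ a.natAbs),
          (1 + (((p : ℝ) - 1) * (p : ℝ) ^ (s + 1))⁻¹) :=
  stmt18_general a ha y s hs
end
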